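/- Every integral point of Δ(m) is a vertex of K(m); i.e., if x ∈ Δ(m) has all coordinates in {0,1}, then the columns of x are images under g of group elements of Z₂ × Z₂ summing to the identity. -/
import Mathlib


open Finset

/-- The map `g : ℤ₂ × ℤ₂ → ℝ³` sending the identity to `0` and the three
non-identity elements to the standard basis vectors. -/
def gmap (a : ZMod 2 × ZMod 2) : Fin 3 → ℝ :=
  if a = (1, 0) then (fun i => if i = 0 then 1 else 0)
  else if a = (0, 1) then (fun i => if i = 1 then 1 else 0)
  else if a = (1, 1) then (fun i => if i = 2 then 1 else 0)
  else 0

/-- The vertex set of the Kimura-3 polytope `K(m)`: points of `ℝ^{3×m}` whose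
columns are images under `g` of group elements summing to the identity. -/
def KVert (m : ℕ) : Set (Fin 3 → Fin m → ℝ) :=
  {x | ∃ gs : Fin m → ZMod 2 × ZMod 2,
        (∑ j, gs j) = 0 ∧ ∀ j, (fun i => x i j) = gmap (gs j)}

/-- The polytope `Δ(m)`, given by its H-description. -/
def DeltaSet (m : ℕ) : Set (Fin 3 → Fin m → ℝ) :=
  {x | (∀ i j, 0 ≤ x i j) ∧ (∀ j, (∑ i, x i j) ≤ 1) ∧
    ∀ A : Finset (Fin m), Odd A.card → ∀ r s : Fin 3, r ≠ s →
      ∑ j ∈ A, (x r j + x s j) ≤ (A.card : ℝ) - 1 + ∑ j ∈ Aᶜ, (x r j + x s j)}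

lemma gmap_id : gmap 0 = 0 := by
  rw [gmap, if_neg (by decide), if_neg (by decide), if_neg (by decide)]
lemma gmap_10 : gmap (1,0) = fun i => if i = 0 then 1 else 0 := by
  rw [gmap, if_pos rfl]
lemma gmap_01 : gmap (0,1) = fun i => if i = 1 then 1 else 0 := by
  rw [gmap, if_neg (by decide), if_pos rfl]
lemma gmap_11 : gmap (1,1) = fun i => if i = 2 then 1 else 0 := by
  rw [gmap, if_neg (by decide), if_neg (by decide), if_pos rfl]

lemma colclass {m : ℕ} (x : Fin 3 → Fin m → ℝ) (h0 : ∀ i j, 0 ≤ x i j)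
    (h1 : ∀ j, (∑ i, x i j) ≤ 1) (hint : ∀ i j, x i j = 0 ∨ x i j = 1) (j : Fin m) :
    (x 0 j = 0 ∧ x 1 j = 0 ∧ x 2 j = 0) ∨ (x 0 j = 1 ∧ x 1 j = 0 ∧ x 2 j = 0) ∨
    (x 0 j = 0 ∧ x 1 j = 1 ∧ x 2 j = 0) ∨ (x 0 j = 0 ∧ x 1 j = 0 ∧ x 2 j = 1) := by
  have hsum := h1 j
  rw [Fin.sum_univ_three] at hsum
  rcases hint 0 j with a|a <;> rcases hint 1 j with b|b <;> rcases hint 2 j with c|c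
  · exact Or.inl ⟨a,b,c⟩
  · exact Or.inr (Or.inr (Or.inr ⟨a,b,c⟩))
  · exact Or.inr (Or.inr (Or.inl ⟨a,b,c⟩))
  · exfalso; linarith [h0 0 j]
  · exact Or.inr (Or.inl ⟨a,b,c⟩)
  · exfalso; linarith [h0 1 j]
  · exfalso; linarith [h0 2 j]
  · exfalso; linarith

lemma not_both {m : ℕ} (x : Fin 3 → Fin m → ℝ) (h0 : ∀ i j, 0 ≤ x i j)
    (h1 : ∀ j, (∑ i, x i j) ≤ 1) (r s : Fin 3) (hrs : r ≠ s) (j : Fin m) :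
    ¬ (x r j = 1 ∧ x s j = 1) := by
  rintro ⟨hr, hs⟩
  have hle : x r j + x s j ≤ ∑ i, x i j := by
    have h := Finset.sum_le_sum_of_subset_of_nonneg (s := ({r, s} : Finset (Fin 3)))
      (Finset.subset_univ _) (fun i _ _ => h0 i j)
    rwa [Finset.sum_pair hrs] at h
  have := h1 j
  rw [hr, hs] at hle
  linarith

lemma parity {m : ℕ} (x : Fin 3 → Fin m → ℝ) (hx : x ∈ DeltaSet m)
    (hint : ∀ i j, x i j = 0 ∨ x i j = 1) (r s : Fin 3) (hrs : r ≠ s) :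
    Even (filter (fun j => x r j = 1 ∨ x s j = 1) univ).card := by
  obtain ⟨h0, h1, hA⟩ := hx
  by_contra hodd
  rw [Nat.not_even_iff_odd] at hodd
  set S := filter (fun j => x r j = 1 ∨ x s j = 1) univ with hS
  have hineq := hA S hodd r s hrs
  have hSsum : ∑ j ∈ S, (x r j + x s j) = S.card := by
    have hterm : ∀ j ∈ S, x r j + x s j = 1 := by
      intro j hj
      rw [hS, mem_filter] at hj
      have hnb := not_both x h0 h1 r s hrs j
      rcases hj.2 with h | h
      · have hz : x s j = 0 := by
          rcases hint s j with h' | h'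
          · exact h'
          · exact absurd ⟨h, h'⟩ hnb
        rw [h, hz]; ring
      · have hz : x r j = 0 := by
          rcases hint r j with h' | h'
          · exact h'
          · exact absurd ⟨h', h⟩ hnb
        rw [h, hz]; ring
    rw [Finset.sum_congr rfl hterm, Finset.sum_const, nsmul_eq_mul, mul_one]
  have hCsum : ∑ j ∈ Sᶜ, (x r j + x s j) = 0 := by
    apply Finset.sum_eq_zero
    intro j hj
    rw [Finset.mem_compl, hS, mem_filter] at hj
    push_neg at hj
    have h1' := hj (mem_univ j)
    have hr0 : x r j = 0 := by rcases hint r j with h' | h'; exact h'; exact absurd h' h1'.1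
    have hs0 : x s j = 0 := by rcases hint s j with h' | h'; exact h'; exact absurd h' h1'.2
    rw [hr0, hs0]; ring
  rw [hSsum, hCsum] at hineq
  linarith

lemma even_cast_zmod2 {n : ℕ} (h : Even n) : (n : ZMod 2) = 0 := by
  obtain ⟨k, hk⟩ := h
  have h2 : (2 : ZMod 2) = 0 := by decide
  rw [hk, Nat.cast_add, ← two_mul, h2, zero_mul]

/-- Every integral point of `Δ(m)` is a vertex of `K(m)`: its columns are images
under `g` of group elements of `ℤ₂ × ℤ₂` summing to the identity. -/
theorem integral_point_of_Delta_is_Kimura_vertex (m : ℕ) (hm : 3 ≤ m)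
    (x : Fin 3 → Fin m → ℝ) (hx : x ∈ DeltaSet m)
    (hint : ∀ i j, x i j = 0 ∨ x i j = 1) :
    x ∈ KVert m := by
  classical
  obtain ⟨h0, h1, hA⟩ := hx
  set gs : Fin m → ZMod 2 × ZMod 2 := fun j =>
    if x 0 j = 1 then (1,0) else if x 1 j = 1 then (0,1) else
      if x 2 j = 1 then (1,1) else 0 with hgs
  have hcc := colclass x h0 h1 hint
  refine ⟨gs, ?_, ?_⟩
  · have hfst : ∀ j, (gs j).1 = if x 0 j = 1 ∨ x 2 j = 1 then (1 : ZMod 2) else 0 := by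
      intro j
      rcases hcc j with ⟨a,b,c⟩|⟨a,b,c⟩|⟨a,b,c⟩|⟨a,b,c⟩ <;> simp [hgs, a, b, c]
    have hsnd : ∀ j, (gs j).2 = if x 1 j = 1 ∨ x 2 j = 1 then (1 : ZMod 2) else 0 := by
      intro j
      rcases hcc j with ⟨a,b,c⟩|⟨a,b,c⟩|⟨a,b,c⟩|⟨a,b,c⟩ <;> simp [hgs, a, b, c]
    have hp1 := parity x ⟨h0, h1, hA⟩ hint 0 2 (by decide)
    have hp2 := parity x ⟨h0, h1, hA⟩ hint 1 2 (by decide)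
    apply Prod.ext
    · rw [Prod.fst_sum, Finset.sum_congr rfl (fun j _ => hfst j), Finset.sum_boole]
      exact even_cast_zmod2 hp1
    · rw [Prod.snd_sum, Finset.sum_congr rfl (fun j _ => hsnd j), Finset.sum_boole]
      exact even_cast_zmod2 hp2
  · intro j
    rcases hcc j with ⟨a,b,c⟩|⟨a,b,c⟩|⟨a,b,c⟩|⟨a,b,c⟩
    · have hg : gs j = 0 := by simp [hgs, a, b, c]
      rw [hg, gmap_id]; funext i; fin_cases i <;> simp [a, b, c]
    · have hg : gs j = (1,0) := by simp [hgs, a]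
      rw [hg, gmap_10]; funext i; fin_cases i <;> simp [a, b, c]
    · have hg : gs j = (0,1) := by simp [hgs, a, b]
      rw [hg, gmap_01]; funext i; fin_cases i <;> simp [a, b, c]
    · have hg : gs j = (1,1) := by simp [hgs, a, b, c]
      rw [hg, gmap_11]; funext i; fin_cases i <;> simp [a, b, c]
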